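/- arXiv:math/0307046 — 5 statements merged into one kernel-verified Lean document; each statement's English description precedes it below -/
import Mathlib

section
/- Let R be a commutative ring containing a non-trivial idempotent e (e² = e, e ≠ 0, e ≠ 1). Then H = R[X]/<eX> is a Hopf algebra over R that is projective as an R-module, is not finitely generated as an R-module, and contains a non-zero integral (the image of e). In particular, R[X] = <eX> ⊕ Re ⊕ R(1−e)[X] as R-modules. -/
universe u

open Polynomial

/-- A left integral: `h * t = ε(h) • t` for all `h`. -/
def IsLeftIntegral (R : Type u) {H : Type*} [CommRing R] [Ring H] [HopfAlgebra R H]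
    (t : H) : Prop :=
  ∀ h : H, h * t = Coalgebra.counit (R := R) h • t

/-- A right integral: `t * h = ε(h) • t` for all `h`. -/
def IsRightIntegral (R : Type u) {H : Type*} [CommRing R] [Ring H] [HopfAlgebra R H]
    (t : H) : Prop :=
  ∀ h : H, t * h = Coalgebra.counit (R := R) h • t

/-!
Since `e • X` is primitive, `⟨e X⟩` is a Hopf ideal of the polynomial Hopf algebra, so
`H = R[X] ⧸ ⟨e X⟩` is a quotient Hopf algebra. In `H` we have `e X = 0`, hence `e h = ε(h) e` for
all `h`: the image of `e` is an integral, non-zero because `e X` has no constant term.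
The projections `f ↦ e (f - f(0))`, `f ↦ f(0) e`, `f ↦ (1 - e) f` split `R[X]` as
`⟨e X⟩ ⊕ R e ⊕ (1 - e) R[X]`, so `H ≅ R e ⊕ (1 - e) R[X]` is a direct summand of a free module.
It is not finite because it surjects onto `(R ⧸ e R)[X]`, and `R ⧸ e R ≠ 0` as `e ≠ 1`.
-/

open TensorProduct

namespace Polynomial

noncomputable instance instBialgebra (R : Type*) [CommSemiring R] : Bialgebra R R[X] :=
  .ofAlgHom (aeval (X ⊗ₜ 1 + 1 ⊗ₜ X)) (aeval 0)
    (algHom_ext <| by simp [Algebra.TensorProduct.one_def, tmul_add, add_tmul, add_assoc])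
    (algHom_ext <| by simp)
    (algHom_ext <| by simp)

@[simp] lemma comul_X {R : Type*} [CommSemiring R] :
    Coalgebra.comul (R := R) (X : R[X]) = X ⊗ₜ 1 + 1 ⊗ₜ X :=
  aeval_X _

@[simp] lemma counit_apply {R : Type*} [CommSemiring R] (p : R[X]) :
    Coalgebra.counit (R := R) p = p.coeff 0 := by
  rw [coeff_zero_eq_aeval_zero]; rfl

noncomputable instance instHopfAlgebra (R : Type*) [CommRing R] : HopfAlgebra R R[X] :=
  .ofAlgHom (aeval (-X))
    (algHom_ext <| by
      simp only [AlgHom.comp_apply, Bialgebra.comulAlgHom]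
      -- `ofAlgHom` states this with a `Commute` proof that only typechecks after unfolding
      -- instances, so `rw` cannot abstract the goal.
      erw [comul_X, map_add, Algebra.TensorProduct.lift_tmul, Algebra.TensorProduct.lift_tmul]
      simp)
    (algHom_ext <| by simp)

@[simp] lemma antipode_X {R : Type*} [CommRing R] : HopfAlgebra.antipode R (X : R[X]) = -X :=
  aeval_X _

end Polynomial

theorem Ideal.isHopfIdeal_span_singleton {R A : Type*} [CommRing R] [CommRing A]
    [HopfAlgebra R A] {p : A} (hΔ : Coalgebra.comul (R := R) p = p ⊗ₜ 1 + 1 ⊗ₜ p)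
    (hε : Coalgebra.counit (R := R) p = 0) (hS : HopfAlgebra.antipode R p = -p) :
    (Ideal.span {p}).IsHopfIdeal R where
  counit_eq_zero x hx := by
    obtain ⟨a, rfl⟩ := Ideal.mem_span_singleton'.mp hx
    rw [← Bialgebra.counitAlgHom_apply, map_mul]
    simp [hε]
  map_mkQ_comul_eq_zero x hx := by
    obtain ⟨a, rfl⟩ := Ideal.mem_span_singleton'.mp hx
    have hp : Ideal.Quotient.mkₐ R (Ideal.span {p}) p = 0 :=
      Ideal.Quotient.eq_zero_iff_mem.mpr (Ideal.mem_span_singleton_self p)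
    have key : Algebra.TensorProduct.map (Ideal.Quotient.mkₐ R (Ideal.span {p}))
        (Ideal.Quotient.mkₐ R (Ideal.span {p})) (Bialgebra.comulAlgHom R A (a * p)) = 0 := by
      rw [map_mul, map_mul]
      simp [hΔ, hp]
    exact key
  antipode_mem x hx := by
    obtain ⟨a, rfl⟩ := Ideal.mem_span_singleton'.mp hx
    rw [HopfAlgebra.antipode_mul_antidistrib, hS, neg_mul]
    exact neg_mem (Ideal.mul_mem_right _ _ (Ideal.mem_span_singleton_self p))

theorem DirectSum.isInternal_of_projections {ι R M : Type*} [DecidableEq ι] [Fintype ι] [Ring R]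
    [AddCommGroup M] [Module R M] {A : ι → Submodule R M} (p : ι → M →ₗ[R] M)
    (hsum : ∀ x, ∑ i, p i x = x) (hmem : ∀ i x, p i x ∈ A i)
    (hvanish : ∀ i j, i ≠ j → ∀ x ∈ A j, p i x = 0) :
    DirectSum.IsInternal A := by
  refine isInternal_submodule_of_iSupIndep_of_iSup_eq_top (fun i ↦ ?_) ?_
  · refine Submodule.disjoint_def.mpr fun x hxi hx ↦ ?_
    have hfix : p i x = x := by
      conv_rhs => rw [← hsum x]
      exact (Finset.sum_eq_single i (fun j _ hji ↦ hvanish j i hji x hxi) (by simp)).symm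
    have hker : (⨆ j, ⨆ (_ : j ≠ i), A j) ≤ LinearMap.ker (p i) :=
      iSup₂_le fun j hj y hy ↦ hvanish i j (Ne.symm hj) y hy
    rw [← hfix]
    exact hker hx
  · refine eq_top_iff.mpr fun x _ ↦ ?_
    rw [← hsum x]
    exact Submodule.sum_mem_iSup fun i ↦ hmem i x

theorem DirectSum.IsInternal.isCompl_fin_three {R M : Type*} [Ring R] [AddCommGroup M]
    [Module R M] {A : Fin 3 → Submodule R M} (h : DirectSum.IsInternal A) :
    IsCompl (A 0) (A 1 ⊔ A 2) where
  disjoint := (iSupIndep_fin_three.mp h.submodule_iSupIndep).1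
  codisjoint := codisjoint_iff.mpr <| by
    rw [← sup_assoc, ← iSup_fin_three, h.submodule_iSup_eq_top]

theorem Module.Projective.quotient_of_isCompl {R M : Type*} [Ring R] [AddCommGroup M]
    [Module R M] [Module.Projective R M] {N N' : Submodule R M} (h : IsCompl N N') :
    Module.Projective R (M ⧸ N) :=
  have : Module.Projective R N' :=
    .of_split N'.subtype (N'.projectionOnto N h.symm) (LinearMap.ext fun x ↦
      N'.projectionOnto_apply_left h.symm x)
  .of_equiv (N.quotientEquivOfIsCompl N' h).symm

namespace Polynomial

variable {R : Type*} [CommRing R]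

theorem not_finite_quotient_of_le_map_C {J : Ideal R} (hJ : J ≠ ⊤) {I : Ideal R[X]}
    (hI : I ≤ J.map C) : ¬ Module.Finite R (R[X] ⧸ I) := by
  intro hfin
  have : Nontrivial (R ⧸ J) := Ideal.Quotient.nontrivial_iff.mpr hJ
  let ψ : (R[X] ⧸ I) →ₐ[R] (R ⧸ J)[X] := Ideal.Quotient.liftₐ I
    (mapAlgHom (Ideal.Quotient.mkₐ R J)) fun a ha ↦ by
      have := hI ha
      rw [← Ideal.mk_ker (I := J), ← ker_mapRingHom] at this
      exact this
  have hψ : Function.Surjective ψ := fun g ↦ by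
    obtain ⟨q, rfl⟩ := map_surjective _ Ideal.Quotient.mk_surjective g
    exact ⟨Ideal.Quotient.mk I q, rfl⟩
  have : Module.Finite R (R ⧸ J)[X] := .of_surjective ψ.toLinearMap hψ
  exact not_finite (Module.Finite.of_restrictScalars_finite R (R ⧸ J) _)

theorem isInternal_span_C_mul_X {e : R} (he : IsIdempotentElem e) :
    DirectSum.IsInternal (M := R[X])
      (fun i : Fin 3 =>
        if i = 0 then Submodule.restrictScalars R (Ideal.span {C e * X})
        else if i = 1 then Submodule.span R {(C e : R[X])}
        else Submodule.restrictScalars R (Ideal.span {(C (1 - e) : R[X])})) := by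
  have horth : C (1 - e) * C e = (0 : R[X]) := by rw [← C_mul, he.one_sub_mul_self, C_0]
  let q : R[X] →ₗ[R] R[X] := (lcoeff R 0).smulRight (C e)
  refine DirectSum.isInternal_of_projections
    ![LinearMap.mulLeft R (C e) - q, q, LinearMap.mulLeft R (C (1 - e))] ?_ ?_ ?_
  · intro f
    simp only [Fin.sum_univ_three, Fin.isValue, Matrix.cons_val_zero, Matrix.cons_val_one,
      Matrix.cons_val, LinearMap.sub_apply, LinearMap.mulLeft_apply, map_sub, map_one]
    ring
  · intro i f
    fin_cases i <;>
      simp only [Fin.zero_eta, Fin.mk_one, Fin.reduceFinMk, Fin.isValue, ↓reduceIte,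
        Fin.reduceEq, one_ne_zero, Matrix.cons_val_zero, Matrix.cons_val_one, Matrix.cons_val,
        LinearMap.sub_apply, LinearMap.mulLeft_apply, q, LinearMap.coe_smulRight, lcoeff_apply,
        Submodule.restrictScalars_mem]
    · refine Ideal.mem_span_singleton'.mpr ⟨divX f, ?_⟩
      rw [smul_eq_C_mul]
      linear_combination C e * X_mul_divX_add f
    · exact Submodule.smul_mem _ _ (Submodule.mem_span_singleton_self _)
    · exact Ideal.mul_mem_right f _ (Ideal.mem_span_singleton_self _)
  · intro i j hij f hf
    fin_cases i <;> fin_cases j <;>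
      simp only [Fin.zero_eta, Fin.mk_one, Fin.reduceFinMk, Fin.isValue, ne_eq, Fin.reduceEq,
        not_true_eq_false, not_false_eq_true, ↓reduceIte, Submodule.restrictScalars_mem,
        Submodule.mem_span_singleton] at hij hf <;>
      obtain ⟨a, rfl⟩ := hf <;>
      simp only [Fin.zero_eta, Fin.mk_one, Fin.reduceFinMk, Fin.isValue, Matrix.cons_val_zero,
        Matrix.cons_val_one, Matrix.cons_val, LinearMap.sub_apply, LinearMap.mulLeft_apply, q,
        LinearMap.coe_smulRight, lcoeff_apply, mul_coeff_zero, coeff_C_zero, coeff_X_zero,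
        smul_eq_mul, smul_eq_C_mul, C_mul, C_0, mul_zero, zero_mul]
    · ring
    · linear_combination (a - C (a.coeff 0)) * horth
    · linear_combination C (a.coeff 0) * horth
    · linear_combination a * X * horth
    · linear_combination C a * horth

instance isHopfIdeal_span_C_mul_X (e : R) : (Ideal.span {C e * X}).IsHopfIdeal R := by
  refine Ideal.isHopfIdeal_span_singleton ?_ (by simp) ?_ <;> rw [← smul_eq_C_mul]
  · rw [map_smul, comul_X, smul_add, smul_tmul', tmul_smul]
  · rw [map_smul, antipode_X, smul_neg]

theorem mk_C_mul_mk (e : R) (f : R[X]) :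
    Ideal.Quotient.mk (Ideal.span {C e * X}) (C e) * Ideal.Quotient.mk _ f =
      f.coeff 0 • Ideal.Quotient.mk (Ideal.span {C e * X}) (C e) := by
  change _ = Ideal.Quotient.mk _ (f.coeff 0 • C e)
  rw [← map_mul, Ideal.Quotient.mk_eq_mk_iff_sub_mem, smul_eq_C_mul, Ideal.mem_span_singleton']
  exact ⟨divX f, by linear_combination C e * X_mul_divX_add f⟩

theorem isRightIntegral_mk_C (e : R) :
    IsRightIntegral R (Ideal.Quotient.mk (Ideal.span {C e * X}) (C e)) := by
  intro h
  obtain ⟨f, rfl⟩ := Ideal.Quotient.mk_surjective h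
  rw [mk_C_mul_mk, Bialgebra.Quotient.counit_mk, counit_apply]

theorem isLeftIntegral_mk_C (e : R) :
    IsLeftIntegral R (Ideal.Quotient.mk (Ideal.span {C e * X}) (C e)) :=
  fun h ↦ (mul_comm h _).trans (isRightIntegral_mk_C e h)

theorem mk_C_ne_zero {e : R} (he0 : e ≠ 0) :
    Ideal.Quotient.mk (Ideal.span {C e * X}) (C e) ≠ 0 := by
  rw [Ne, Ideal.Quotient.eq_zero_iff_mem, Ideal.mem_span_singleton']
  rintro ⟨g, hg⟩
  exact he0 (by simpa [mul_coeff_zero] using congr_arg (coeff · 0) hg.symm)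

theorem not_finite_quotient_span_C_mul_X {e : R} (he : IsIdempotentElem e) (he1 : e ≠ 1) :
    ¬ Module.Finite R (R[X] ⧸ Ideal.span {C e * X}) := by
  refine not_finite_quotient_of_le_map_C (J := Ideal.span {e}) ?_ ?_
  · rw [Ne, Ideal.span_singleton_eq_top]
    exact fun hu ↦ he1 ((IsIdempotentElem.iff_eq_one_of_isUnit hu).mp he)
  · rw [Ideal.span_singleton_le_iff_mem]
    exact Ideal.mul_mem_right _ _ (Ideal.mem_map_of_mem C (Ideal.mem_span_singleton_self e))

theorem projective_quotient_span_C_mul_X {e : R} (he : IsIdempotentElem e) :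
    Module.Projective R (R[X] ⧸ Ideal.span {C e * X}) :=
  have : Module.Projective R (R[X] ⧸ (Ideal.span {C e * X}).restrictScalars R) :=
    Module.Projective.quotient_of_isCompl (isInternal_span_C_mul_X he).isCompl_fin_three
  .of_equiv (Submodule.Quotient.restrictScalarsEquiv R _)

end Polynomial

/-- If `R` has a non-trivial idempotent `e`, then `H = R[X]/⟨eX⟩` is a projective, non-finitely
generated Hopf algebra over `R` containing a non-zero integral (the image of `e`); in particular
`R[X] = ⟨eX⟩ ⊕ Re ⊕ R(1-e)[X]` as `R`-modules. -/
theorem projective_nonfinite_hopf_with_integral (R : Type u) [CommRing R]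
    (e : R) (he : IsIdempotentElem e) (he0 : e ≠ 0) (he1 : e ≠ 1) :
    (∃ (H : Type u) (_ : CommRing H) (_ : HopfAlgebra R H) (t : H),
        Module.Projective R H ∧ ¬ Module.Finite R H ∧
        t ≠ 0 ∧ IsLeftIntegral R t ∧ IsRightIntegral R t) ∧
    (Module.Projective R (R[X] ⧸ Ideal.span {(C e) * X}) ∧
      ¬ Module.Finite R (R[X] ⧸ Ideal.span {(C e) * X}) ∧
      (Ideal.Quotient.mk (Ideal.span {(C e) * X}) (C e)) ≠ 0 ∧
      (∀ f : R[X],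
        Ideal.Quotient.mk (Ideal.span {(C e) * X}) (C e) *
            Ideal.Quotient.mk (Ideal.span {(C e) * X}) f =
          f.coeff 0 • Ideal.Quotient.mk (Ideal.span {(C e) * X}) (C e) ∧
        Ideal.Quotient.mk (Ideal.span {(C e) * X}) f *
            Ideal.Quotient.mk (Ideal.span {(C e) * X}) (C e) =
          f.coeff 0 • Ideal.Quotient.mk (Ideal.span {(C e) * X}) (C e))) ∧
    DirectSum.IsInternal (M := R[X])
      (fun i : Fin 3 =>
        if i = 0 then Submodule.restrictScalars R (Ideal.span {(C e) * X})
        else if i = 1 then Submodule.span R {(C e : R[X])}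
        else Submodule.restrictScalars R (Ideal.span {(C (1 - e) : R[X])})) := by
  have hproj := projective_quotient_span_C_mul_X he
  have hfin := not_finite_quotient_span_C_mul_X he he1
  have hne := mk_C_ne_zero he0
  exact ⟨⟨_, inferInstance, inferInstance, _, hproj, hfin, hne, isLeftIntegral_mk_C e,
      isRightIntegral_mk_C e⟩,
    ⟨hproj, hfin, hne, fun f ↦ ⟨mk_C_mul_mk e f, (mul_comm _ _).trans (mk_C_mul_mk e f)⟩⟩,
    isInternal_span_C_mul_X he⟩
end

section
/- Let R be an integral domain with quotient field Q, and let M be a projective R-module such that M ⊗_R Q is a finite-dimensional Q-vector space. Then M is finitely generated as an R-module. -/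
universe u v

open TensorProduct

/-- A projective module `M` over an integral domain `R` whose scalar extension to the quotient
field `Q = Frac(R)` is a finite-dimensional `Q`-vector space is finitely generated over `R`. -/
theorem Module.Finite.of_projective_finiteDimensional_baseChange (R : Type u) [CommRing R]
    [IsDomain R] (M : Type v) [AddCommGroup M] [Module R M] [Module.Projective R M]
    (h : FiniteDimensional (FractionRing R) (FractionRing R ⊗[R] M)) :
    Module.Finite R M := by
  classical
  set Q := FractionRing R
  obtain ⟨s, hs⟩ := Module.projective_def.mp ‹Module.Projective R M›
  -- f : M → (M →₀ Q), coordinatewise image of s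
  let f : M →ₗ[R] (M →₀ Q) :=
    (Finsupp.mapRange.linearMap (Algebra.linearMap R Q)).comp s
  let ψ : Q ⊗[R] M →ₗ[Q] (M →₀ Q) := f.liftBaseChange Q
  obtain ⟨G, hG⟩ : (⊤ : Submodule Q (Q ⊗[R] M)).FG := Module.finite_def.mp h
  set T : Finset M := G.sup fun g => (ψ g).support with hT
  have hrange : LinearMap.range ψ ≤ Finsupp.supported Q Q (T : Set M) := by
    rw [LinearMap.range_eq_map, ← hG, Submodule.map_span, Submodule.span_le]
    rintro - ⟨g, hg, rfl⟩
    intro t ht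
    exact Finset.mem_coe.mpr (Finset.le_sup (f := fun g => (ψ g).support) hg ht)
  have hsupp : ∀ m : M, (s m).support ⊆ T := by
    intro m t ht
    have hfm : f m ∈ Finsupp.supported Q Q (T : Set M) := by
      have : f m = ψ (1 ⊗ₜ m) := by simp [ψ, f]
      rw [this]
      exact hrange ⟨1 ⊗ₜ m, rfl⟩
    have : (f m) t ≠ 0 := by
      simp only [f, LinearMap.comp_apply, Finsupp.mapRange.linearMap_apply,
        Finsupp.mapRange_apply, Algebra.linearMap_apply]
      intro hzero
      exact Finsupp.mem_support_iff.mp ht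
        ((map_eq_zero_iff _ (IsFractionRing.injective R Q)).mp hzero)
    exact (Finsupp.mem_supported Q (f m)).mp hfm (Finsupp.mem_support_iff.mpr this)
  refine ⟨⟨T, ?_⟩⟩
  rw [Submodule.eq_top_iff']
  intro m
  have : m = (s m).sum fun t r => r • t := by
    conv_lhs => rw [← hs m]
    rw [Finsupp.linearCombination_apply]
    simp [Finsupp.sum]
  rw [this]
  exact Submodule.sum_mem _ fun t ht =>
    Submodule.smul_mem _ _ (Submodule.subset_span (hsupp m ht))
end

section
/- Let S be a semigroup (or monoid) and R a commutative ring. The R-submodule of left integrals of the semigroup bialgebra R[S] is spanned as an R-module by elements of the form t = Σ_{x∈I} x, where I ranges over the left ideals of S that are finite groups. Moreover the set of left integrals equals t'·R[S] for t' = Σ_{y∈I} y for any fixed left ideal I of S that is a finite group (if one exists). -/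
universe u v

/-- `I` is a (finite, non-empty) left ideal of the monoid `S` which is a group. -/
def IsFiniteGroupLeftIdeal {S : Type v} [Monoid S] (I : Finset S) : Prop :=
  I.Nonempty ∧ (∀ s : S, ∀ x ∈ I, s * x ∈ I) ∧
    ∃ e ∈ I, (∀ x ∈ I, e * x = x ∧ x * e = x) ∧ ∀ x ∈ I, ∃ y ∈ I, x * y = e ∧ y * x = e

/-- A left integral of the semigroup bialgebra `R[S]`: an element `t` with `s·t = t` for all
`s ∈ S` (equivalently `f·t = ε(f)·t` for all `f ∈ R[S]`). -/
def IsLeftIntegralMA (R : Type u) [CommRing R] {S : Type v} [Monoid S]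
    (t : MonoidAlgebra R S) : Prop :=
  ∀ s : S, MonoidAlgebra.single s (1 : R) * t = t

/-- The element `t_I = ∑_{x ∈ I} x` of `R[S]`. -/
noncomputable def sumOf (R : Type u) [CommRing R] {S : Type v} [Monoid S] (I : Finset S) :
    MonoidAlgebra R S :=
  ∑ x ∈ I, MonoidAlgebra.single x (1 : R)

/-!
If `s * t = t` for every `s`, then left multiplication by each `s` permutes the finite support `A`
of `t` and preserves the coefficients of `t`. Hence for `a ∈ A` the orbit `S * a` lies in `A`,
every element of it generates it as a left ideal and divides every other one inside it, so it is
a group, and `t` is constant on it; subtracting `t(a) • ∑_{S * a}` shrinks the support, which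
gives the spanning statement by induction. For two such group left ideals `I`, `J` and `f ∈ J`,
`x ↦ x * f` maps `I` bijectively onto `J`, so `∑_J = ∑_I * f`.
-/

open Finset MonoidAlgebra

namespace IsFiniteGroupLeftIdeal

variable {S : Type*} [Monoid S] {I J : Finset S}

/-- Right division inside `J` gives some `e` with `a * e = a` and right inverses; left division
spreads `x * e = x` from `a` to all of `J`, and a right identity with right inverses is a group. -/
theorem of_divisible (hne : J.Nonempty) (hideal : ∀ s : S, ∀ x ∈ J, s * x ∈ J)
    (hdivl : ∀ x ∈ J, ∀ b ∈ J, ∃ s : S, s * x = b)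
    (hdivr : ∀ x ∈ J, ∀ b ∈ J, ∃ y ∈ J, x * y = b) : IsFiniteGroupLeftIdeal J := by
  obtain ⟨a, ha⟩ := hne
  obtain ⟨e, he, hae⟩ := hdivr a ha a ha
  have mul_e : ∀ x ∈ J, x * e = x := fun x hx => by
    obtain ⟨s, rfl⟩ := hdivl a ha x hx
    rw [mul_assoc, hae]
  have inv_mul : ∀ x ∈ J, ∀ z ∈ J, x * z = e → z * x = e := fun x hx z hz hxz => by
    obtain ⟨w, -, hzw⟩ := hdivr z hz e he
    calc z * x = z * x * (z * w) := by rw [hzw, mul_e _ (hideal z x hx)]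
      _ = z * (x * z) * w := by simp only [mul_assoc]
      _ = e := by rw [hxz, mul_e z hz, hzw]
  refine ⟨⟨a, ha⟩, hideal, e, he, fun x hx => ⟨?_, mul_e x hx⟩, fun x hx => ?_⟩
  · obtain ⟨z, hz, hxz⟩ := hdivr x hx e he
    rw [← hxz, mul_assoc, inv_mul x hx z hz hxz, mul_e x hx]
  · obtain ⟨z, hz, hxz⟩ := hdivr x hx e he
    exact ⟨z, hz, hxz, inv_mul x hx z hz hxz⟩

theorem injOn_mul_left (hI : IsFiniteGroupLeftIdeal I) (s : S) : Set.InjOn (s * ·) I := by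
  obtain ⟨-, hideal, e, he, hid, hinv⟩ := hI
  obtain ⟨y, -, -, hy⟩ := hinv (s * e) (hideal s e he)
  have cancel : ∀ z ∈ I, y * (s * z) = z := fun z hz => by
    rw [← (hid z hz).1, ← mul_assoc, ← mul_assoc, mul_assoc y, hy, (hid z hz).1]
  intro x hx x' hx' h
  rw [← cancel x hx, ← cancel x' hx']
  exact congrArg (y * ·) h

theorem injOn_mul_right (hI : IsFiniteGroupLeftIdeal I) (s : S) : Set.InjOn (· * s) I := by
  obtain ⟨-, hideal, e, he, hid, hinv⟩ := hI
  obtain ⟨y, -, hy, -⟩ := hinv (s * e) (hideal s e he)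
  have cancel : ∀ z ∈ I, z * s * e * y = z := fun z hz => by
    rw [mul_assoc z, mul_assoc z, hy, (hid z hz).2]
  intro x hx x' hx' h
  rw [← cancel x hx, ← cancel x' hx']
  exact congrArg (· * e * y) h

theorem image_mul_left [DecidableEq S] (hI : IsFiniteGroupLeftIdeal I) (s : S) :
    I.image (s * ·) = I :=
  eq_of_subset_of_card_le (image_subset_iff.2 fun x hx => hI.2.1 s x hx)
    (card_image_of_injOn (hI.injOn_mul_left s)).ge

theorem exists_mul_eq (hI : IsFiniteGroupLeftIdeal I) {x y : S} (hx : x ∈ I) (hy : y ∈ I) :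
    ∃ s : S, s * x = y := by
  obtain ⟨-, -, e, -, hid, hinv⟩ := hI
  obtain ⟨z, -, -, hzx⟩ := hinv x hx
  exact ⟨y * z, by rw [mul_assoc, hzx, (hid y hy).2]⟩

theorem image_mul_right [DecidableEq S] (hI : IsFiniteGroupLeftIdeal I)
    (hJ : IsFiniteGroupLeftIdeal J) {f : S} (hf : f ∈ J) : I.image (· * f) = J := by
  refine Subset.antisymm (image_subset_iff.2 fun x _ => hJ.2.1 x f hf) fun y hy => ?_
  obtain ⟨e, he, -⟩ := hI.2.2
  obtain ⟨s, hs⟩ := hJ.exists_mul_eq (hJ.2.1 e f hf) hy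
  exact mem_image.2 ⟨s * e, hI.2.1 s e he, by rw [mul_assoc, hs]⟩

end IsFiniteGroupLeftIdeal

section BijOn

variable {S : Type*} [Monoid S] {A : Finset S}

theorem exists_pow_mul_eq_of_bijOn {s : S} (hs : Set.BijOn (s * ·) A A) {x : S} (hx : x ∈ A) :
    ∃ n > 0, s ^ n * x = x := by
  obtain ⟨n, hn, hper⟩ := (hs.mapsTo.restrict_inj.2 hs.injOn).mem_periodicPts ⟨x, hx⟩
  refine ⟨n, hn, ?_⟩
  have := congrArg Subtype.val hper.eq
  rwa [hs.mapsTo.iterate_restrict, Set.MapsTo.val_restrict_apply, mul_left_iterate_apply] at this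

theorem exists_mul_mul_eq_of_bijOn {s : S} (hs : Set.BijOn (s * ·) A A) {x : S} (hx : x ∈ A) :
    ∃ u : S, u * (s * x) = x := by
  obtain ⟨n, hn, hsx⟩ := exists_pow_mul_eq_of_bijOn hs hx
  exact ⟨s ^ (n - 1), by rw [← mul_assoc, ← pow_succ, Nat.sub_add_cancel hn, hsx]⟩

theorem exists_isFiniteGroupLeftIdeal_of_bijOn (hA : ∀ s : S, Set.BijOn (s * ·) A A) {a : S}
    (ha : a ∈ A) : ∃ J : Finset S, IsFiniteGroupLeftIdeal J ∧ J ⊆ A ∧ a ∈ J ∧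
      ∀ b ∈ J, ∃ s : S, s * a = b := by
  classical
  set J := A.filter fun b => ∃ s : S, s * a = b
  have mem_J : ∀ {b}, b ∈ J ↔ ∃ s : S, s * a = b := fun {b} => by
    simp only [J, mem_filter, and_iff_right_iff_imp]
    rintro ⟨s, rfl⟩
    exact (hA s).mapsTo ha
  have haJ : a ∈ J := mem_J.2 ⟨1, one_mul a⟩
  refine ⟨J, .of_divisible ⟨a, haJ⟩ ?_ ?_ ?_, filter_subset _ _, haJ,
    fun b hb => mem_J.1 hb⟩
  · intro s x hx
    obtain ⟨u, rfl⟩ := mem_J.1 hx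
    exact mem_J.2 ⟨s * u, mul_assoc s u a⟩
  · intro x hx b hb
    obtain ⟨u, rfl⟩ := mem_J.1 hx
    obtain ⟨v, rfl⟩ := mem_J.1 hb
    obtain ⟨w, hw⟩ := exists_mul_mul_eq_of_bijOn (hA u) ha
    exact ⟨v * w, by rw [mul_assoc, hw]⟩
  · intro x _ b hb
    obtain ⟨y, hy, rfl⟩ := (hA x).surjOn (filter_subset _ _ hb)
    obtain ⟨u, hu⟩ := exists_mul_mul_eq_of_bijOn (hA x) hy
    obtain ⟨v, hv⟩ := mem_J.1 hb
    exact ⟨y, mem_J.2 ⟨u * v, by rw [mul_assoc, hv, hu]⟩, rfl⟩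

end BijOn

section Integrals

variable {R : Type*} [CommRing R] {S : Type*} [Monoid S]

theorem single_mul_sumOf [DecidableEq S] {J : Finset S} {s : S} (h : Set.InjOn (s * ·) J) :
    single s (1 : R) * sumOf R J = sumOf R (J.image (s * ·)) := by
  simp only [sumOf, mul_sum, single_mul_single, one_mul, sum_image h]

theorem sumOf_mul_single [DecidableEq S] {J : Finset S} {s : S} (h : Set.InjOn (· * s) J) :
    sumOf R J * single s (1 : R) = sumOf R (J.image (· * s)) := by
  simp only [sumOf, sum_mul, single_mul_single, one_mul, sum_image h]

theorem support_sub_smul_sumOf_subset [DecidableEq S] {t : MonoidAlgebra R S} {J : Finset S}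
    {c : R} (hc : ∀ x ∈ J, t.coeff x = c) :
    (t - c • sumOf R J).coeff.support ⊆ t.coeff.support \ J := by
  intro x hx
  by_cases hxJ : x ∈ J <;> simp_all [sumOf, coeff_sum, coeff_single, Finsupp.single_apply]

variable (R S) in
def leftIntegrals : Submodule R (MonoidAlgebra R S) where
  carrier := {t | IsLeftIntegralMA R t}
  zero_mem' _ := mul_zero _
  add_mem' ht ht' s := by rw [mul_add, ht s, ht' s]
  smul_mem' c t ht s := by rw [mul_smul_comm, ht s]

theorem isLeftIntegralMA_sumOf {I : Finset S} (hI : IsFiniteGroupLeftIdeal I) :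
    IsLeftIntegralMA R (sumOf R I) := by
  classical
  intro s
  rw [single_mul_sumOf (hI.injOn_mul_left s), hI.image_mul_left]

theorem isLeftIntegralMA_sumOf_mul {I : Finset S} (hI : IsFiniteGroupLeftIdeal I)
    (f : MonoidAlgebra R S) : IsLeftIntegralMA R (sumOf R I * f) := fun s => by
  rw [← mul_assoc, isLeftIntegralMA_sumOf hI s]

theorem sumOf_eq_sumOf_mul_single {I J : Finset S} (hI : IsFiniteGroupLeftIdeal I)
    (hJ : IsFiniteGroupLeftIdeal J) {f : S} (hf : f ∈ J) :
    sumOf R J = sumOf R I * single f 1 := by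
  classical
  rw [sumOf_mul_single (hI.injOn_mul_right f), hI.image_mul_right hJ hf]

namespace IsLeftIntegralMA

variable {t : MonoidAlgebra R S} (ht : IsLeftIntegralMA R t)
include ht

theorem bijOn_mul_left (s : S) : Set.BijOn (s * ·) t.coeff.support t.coeff.support := by
  classical
  have hsub : t.coeff.support ⊆ t.coeff.support.image (s * ·) := by
    conv_lhs => rw [← ht s]
    exact support_coeff_single_mul_subset t 1 s
  have himage : t.coeff.support = t.coeff.support.image (s * ·) :=
    eq_of_subset_of_card_le hsub card_image_le
  refine ⟨fun x hx => ?_, card_image_iff.1 (congrArg card himage).symm, ?_⟩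
  · rw [mem_coe, himage]
    exact mem_image_of_mem _ hx
  · rw [Set.SurjOn, ← coe_image, ← himage]

theorem coeff_mul {x : S} (hx : x ∈ t.coeff.support) (s : S) : t.coeff (s * x) = t.coeff x := by
  conv_lhs => rw [← ht s]
  rw [coeff_single_mul_eq_mul_coeff x fun y hy => (ht.bijOn_mul_left s).injOn.eq_iff hy hx,
    one_mul]

theorem mem_span_sumOf :
    t ∈ Submodule.span R {t | ∃ I : Finset S, IsFiniteGroupLeftIdeal I ∧ t = sumOf R I} := by
  classical
  induction hn : #t.coeff.support using Nat.strong_induction_on generalizing t with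
  | _ n ih =>
    by_cases h0 : t = 0
    · rw [h0]
      exact zero_mem _
    obtain ⟨a, ha⟩ : t.coeff.support.Nonempty := by simpa using h0
    obtain ⟨J, hJ, hJA, haJ, horbit⟩ :=
      exists_isFiniteGroupLeftIdeal_of_bijOn ht.bijOn_mul_left ha
    have hconst : ∀ x ∈ J, t.coeff x = t.coeff a := fun x hx => by
      obtain ⟨s, rfl⟩ := horbit x hx
      exact ht.coeff_mul ha s
    have ht' : IsLeftIntegralMA R (t - t.coeff a • sumOf R J) :=
      (leftIntegrals R S).sub_mem ht ((leftIntegrals R S).smul_mem _ (isLeftIntegralMA_sumOf hJ))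
    have hcard : #(t - t.coeff a • sumOf R J).coeff.support < n :=
      hn ▸ (card_le_card (support_sub_smul_sumOf_subset hconst)).trans_lt
        (card_lt_card (sdiff_ssubset hJA ⟨a, haJ⟩))
    rw [← sub_add_cancel t (t.coeff a • sumOf R J)]
    exact add_mem (ih _ hcard ht' rfl)
      (Submodule.smul_mem _ _ (Submodule.subset_span ⟨J, hJ, rfl⟩))

end IsLeftIntegralMA

variable (R S)

theorem leftIntegrals_eq_span : leftIntegrals R S =
    Submodule.span R {t | ∃ I : Finset S, IsFiniteGroupLeftIdeal I ∧ t = sumOf R I} := by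
  refine le_antisymm (fun t ht => IsLeftIntegralMA.mem_span_sumOf ht) ?_
  rw [Submodule.span_le]
  rintro _ ⟨I, hI, rfl⟩
  exact isLeftIntegralMA_sumOf hI

theorem leftIntegrals_eq_range_mulLeft {I : Finset S} (hI : IsFiniteGroupLeftIdeal I) :
    leftIntegrals R S = LinearMap.range (LinearMap.mulLeft R (sumOf R I)) := by
  refine le_antisymm ?_ ?_
  · rw [leftIntegrals_eq_span, Submodule.span_le]
    rintro _ ⟨J, hJ, rfl⟩
    obtain ⟨f, hf⟩ := hJ.1
    exact ⟨single f 1, (sumOf_eq_sumOf_mul_single hI hJ hf).symm⟩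
  · rintro _ ⟨f, rfl⟩
    exact isLeftIntegralMA_sumOf_mul hI f

end Integrals

/-- The left integrals of `R[S]` are spanned over `R` by the elements `∑_{x∈I} x` for `I` a
left ideal of `S` which is a finite group; and for any fixed such `I`, the set of left
integrals equals `(∑_{x∈I} x)·R[S]`. -/
theorem leftIntegrals_of_monoidAlgebra (R : Type u) [CommRing R] (S : Type v) [Monoid S] :
    ({t : MonoidAlgebra R S | IsLeftIntegralMA R t} =
      ↑(Submodule.span R
        {t : MonoidAlgebra R S | ∃ I : Finset S, IsFiniteGroupLeftIdeal I ∧ t = sumOf R I})) ∧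
    ∀ I : Finset S, IsFiniteGroupLeftIdeal I →
      ∀ t : MonoidAlgebra R S,
        IsLeftIntegralMA R t ↔ ∃ f : MonoidAlgebra R S, t = sumOf R I * f := by
  refine ⟨congrArg SetLike.coe (leftIntegrals_eq_span R S), fun I hI t => ?_⟩
  change t ∈ leftIntegrals R S ↔ _
  rw [leftIntegrals_eq_range_mulLeft R S hI, LinearMap.mem_range]
  simp only [LinearMap.mulLeft_apply, eq_comm]
end

section
/- Let S be a semigroup such that R[S] contains both a non-zero left integral and a non-zero right integral. Then the space of left integrals equals the space of right integrals and both equal R·t, where t = Σ_{x∈I} x for the unique two-sided ideal I of S which is a finite group. -/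
universe u v

/-- `I` is a (finite, non-empty) right ideal of the monoid `S` which is a group. -/
def IsFiniteGroupRightIdeal {S : Type v} [Monoid S] (I : Finset S) : Prop :=
  I.Nonempty ∧ (∀ s : S, ∀ x ∈ I, x * s ∈ I) ∧
    ∃ e ∈ I, (∀ x ∈ I, e * x = x ∧ x * e = x) ∧ ∀ x ∈ I, ∃ y ∈ I, x * y = e ∧ y * x = e

/-- A right integral of `R[S]`: `t·s = t` for all `s ∈ S`. -/
def IsRightIntegralMA (R : Type u) [CommRing R] {S : Type v} [Monoid S]
    (t : MonoidAlgebra R S) : Prop :=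
  ∀ s : S, t * MonoidAlgebra.single s (1 : R) = t

section Aux

variable {R : Type u} [CommRing R] {S : Type v} [Monoid S] [DecidableEq S]

omit [DecidableEq S] in
lemma single_mul_eq_mapDomain (s : S) (t : MonoidAlgebra R S) :
    (MonoidAlgebra.single s (1 : R) * t).coeff = Finsupp.mapDomain (fun x => s * x) t.coeff := by
  induction t using MonoidAlgebra.induction_linear with
  | zero => simp
  | add f g hf hg => rw [mul_add, MonoidAlgebra.coeff_add, MonoidAlgebra.coeff_add, Finsupp.mapDomain_add, hf, hg]
  | single a b =>
      rw [MonoidAlgebra.single_mul_single, one_mul, MonoidAlgebra.coeff_single, MonoidAlgebra.coeff_single, Finsupp.mapDomain_single]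

omit [DecidableEq S] in
lemma mul_single_eq_mapDomain (s : S) (t : MonoidAlgebra R S) :
    (t * MonoidAlgebra.single s (1 : R)).coeff = Finsupp.mapDomain (fun x => x * s) t.coeff := by
  induction t using MonoidAlgebra.induction_linear with
  | zero => simp
  | add f g hf hg => rw [add_mul, MonoidAlgebra.coeff_add, MonoidAlgebra.coeff_add, Finsupp.mapDomain_add, hf, hg]
  | single a b =>
      rw [MonoidAlgebra.single_mul_single, mul_one, MonoidAlgebra.coeff_single, MonoidAlgebra.coeff_single, Finsupp.mapDomain_single]

/-- The support of a left integral is mapped onto itself by every left translation. -/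
lemma left_integral_support_image {t : MonoidAlgebra R S} (ht : IsLeftIntegralMA R t) (s : S) :
    t.coeff.support.image (fun x => s * x) = t.coeff.support := by
  classical
  have h : Finsupp.mapDomain (fun x => s * x) t.coeff = t.coeff := by
    rw [← single_mul_eq_mapDomain, ht s]
  have h1 : t.coeff.support ⊆ t.coeff.support.image (fun x => s * x) := by
    conv_lhs => rw [← h]
    exact Finsupp.mapDomain_support
  exact (Finset.eq_of_subset_of_card_le h1 Finset.card_image_le).symm

/-- The support of a right integral is mapped onto itself by every right translation. -/
lemma right_integral_support_image {t : MonoidAlgebra R S} (ht : IsRightIntegralMA R t) (s : S) :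
    t.coeff.support.image (fun x => x * s) = t.coeff.support := by
  classical
  have h : Finsupp.mapDomain (fun x => x * s) t.coeff = t.coeff := by
    rw [← mul_single_eq_mapDomain, ht s]
  have h1 : t.coeff.support ⊆ t.coeff.support.image (fun x => x * s) := by
    conv_lhs => rw [← h]
    exact Finsupp.mapDomain_support
  exact (Finset.eq_of_subset_of_card_le h1 Finset.card_image_le).symm

/-- A finite nonempty subset of a monoid on which all translations act bijectively is a group. -/
lemma group_structure {T : Finset S} (hne : T.Nonempty)
    (hL : ∀ s : S, T.image (fun x => s * x) = T)
    (hR : ∀ s : S, T.image (fun x => x * s) = T) :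
    ∃ e ∈ T, (∀ x ∈ T, e * x = x ∧ x * e = x) ∧ ∀ x ∈ T, ∃ y ∈ T, x * y = e ∧ y * x = e := by
  classical
  have injL : ∀ s : S, Set.InjOn (fun x => s * x) (T : Set S) := fun s =>
    Finset.injOn_of_card_image_eq (by rw [hL s])
  have injR : ∀ s : S, Set.InjOn (fun x => x * s) (T : Set S) := fun s =>
    Finset.injOn_of_card_image_eq (by rw [hR s])
  have memL : ∀ s : S, ∀ x ∈ T, s * x ∈ T := fun s x hx => by
    rw [← hL s]; exact Finset.mem_image_of_mem _ hx
  have memR : ∀ s : S, ∀ x ∈ T, x * s ∈ T := fun s x hx => by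
    rw [← hR s]; exact Finset.mem_image_of_mem _ hx
  obtain ⟨a, ha⟩ := hne
  obtain ⟨e, heT, hae⟩ : ∃ e ∈ T, a * e = a := by
    have h : a ∈ T.image (fun x => a * x) := by rw [hL a]; exact ha
    obtain ⟨e, he, h⟩ := Finset.mem_image.1 h; exact ⟨e, he, h⟩
  obtain ⟨f, hfT, hfa⟩ : ∃ f ∈ T, f * a = a := by
    have h : a ∈ T.image (fun x => x * a) := by rw [hR a]; exact ha
    obtain ⟨f, hf, h⟩ := Finset.mem_image.1 h; exact ⟨f, hf, h⟩
  have hel : ∀ x ∈ T, e * x = x := by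
    intro x hx
    have h1 : a * (e * x) = a * x := by rw [← mul_assoc, hae]
    exact injL a (memL e x hx) hx h1
  have hfr : ∀ x ∈ T, x * f = x := by
    intro x hx
    have h1 : (x * f) * a = x * a := by rw [mul_assoc, hfa]
    exact injR a (memR f x hx) hx h1
  have hef : e = f := (hfr e heT).symm.trans (hel f hfT)
  have her : ∀ x ∈ T, x * e = x := fun x hx => by rw [hef]; exact hfr x hx
  refine ⟨e, heT, fun x hx => ⟨hel x hx, her x hx⟩, ?_⟩
  intro x hx
  obtain ⟨y, hyT, hxy⟩ : ∃ y ∈ T, x * y = e := by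
    have h : e ∈ T.image (fun z => x * z) := by rw [hL x]; exact heT
    obtain ⟨y, hy, h⟩ := Finset.mem_image.1 h; exact ⟨y, hy, h⟩
  obtain ⟨z, hzT, hzx⟩ : ∃ z ∈ T, z * x = e := by
    have h : e ∈ T.image (fun z => z * x) := by rw [hR x]; exact heT
    obtain ⟨z, hz, h⟩ := Finset.mem_image.1 h; exact ⟨z, hz, h⟩
  have hyz : y = z := by
    calc y = e * y := (hel y hyT).symm
    _ = (z * x) * y := by rw [hzx]
    _ = z * (x * y) := mul_assoc _ _ _
    _ = z * e := by rw [hxy]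
    _ = z := her z hzT
  exact ⟨y, hyT, hxy, by rw [hyz]; exact hzx⟩

omit [DecidableEq S] in
/-- A right ideal which is a group is contained in any left ideal which is a group. -/
lemma subset_aux {T J : Finset S} (hT : IsFiniteGroupRightIdeal T)
    (hJ : IsFiniteGroupLeftIdeal J) : T ⊆ J := by
  obtain ⟨⟨t0, ht0⟩, hTr, e, heT, hidT, hinvT⟩ := hT
  obtain ⟨⟨j0, hj0⟩, hJl, -⟩ := hJ
  intro t ht
  have hxT : t0 * j0 ∈ T := hTr j0 t0 ht0
  have hxJ : t0 * j0 ∈ J := hJl t0 j0 hj0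
  obtain ⟨x', hx'T, hxx', hx'x⟩ := hinvT _ hxT
  have h : t = (t * x') * (t0 * j0) := by
    rw [mul_assoc, hx'x, (hidT t ht).2]
  rw [h]
  exact hJl _ _ hxJ

lemma sumOf_apply (T : Finset S) (y : S) [Decidable (y ∈ T)] :
    (sumOf R T).coeff y = if y ∈ T then (1 : R) else 0 := by
  classical
  rw [sumOf, MonoidAlgebra.coeff_sum, Finset.sum_apply']
  simp [Finsupp.single_apply, Finset.sum_ite_eq]

lemma left_integral_iff_aux {T : Finset S} (e : S) (he : e ∈ T)
    (hid : ∀ x ∈ T, e * x = x ∧ x * e = x)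
    (hL : ∀ s : S, T.image (fun x => s * x) = T)
    (hRid : ∀ s : S, ∀ x ∈ T, x * s ∈ T)
    (t : MonoidAlgebra R S) :
    IsLeftIntegralMA R t ↔ ∃ r : R, t = r • sumOf R T := by
  classical
  constructor
  · intro ht
    refine ⟨t.coeff e, ?_⟩
    have hmap : ∀ s : S, Finsupp.mapDomain (fun x => s * x) t.coeff = t.coeff := fun s => by
      rw [← single_mul_eq_mapDomain, ht s]
    have hsupp : (t.coeff.support : Set S) ⊆ (T : Set S) := by
      intro y hy
      have h1 : t.coeff.support ⊆ t.coeff.support.image (fun x => e * x) := by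
        conv_lhs => rw [← hmap e]
        exact Finsupp.mapDomain_support
      obtain ⟨x, hx, rfl⟩ := Finset.mem_image.1 (h1 hy)
      exact hRid x e he
    have hconst : ∀ z ∈ T, t.coeff z = t.coeff e := by
      intro z hz
      have hinj : Set.InjOn (fun x => z * x) (T : Set S) :=
        Finset.injOn_of_card_image_eq (by rw [hL z])
      have h2 := Finsupp.mapDomain_apply' (T : Set S) t.coeff hsupp hinj (a := e) he
      rw [hmap z] at h2
      simpa [(hid z hz).2] using h2
    ext y
    rw [MonoidAlgebra.coeff_smul_apply, sumOf_apply, smul_eq_mul]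
    by_cases hy : y ∈ T
    · rw [if_pos hy, mul_one, hconst y hy]
    · rw [if_neg hy, mul_zero]
      by_contra hc
      exact hy (hsupp (Finsupp.mem_support_iff.2 hc))
  · rintro ⟨r, rfl⟩ s
    rw [mul_smul_comm]
    congr 1
    rw [sumOf, Finset.mul_sum]
    have hinj : Set.InjOn (fun x => s * x) (T : Set S) :=
      Finset.injOn_of_card_image_eq (by rw [hL s])
    calc ∑ x ∈ T, MonoidAlgebra.single s (1 : R) * MonoidAlgebra.single x 1
        = ∑ x ∈ T, MonoidAlgebra.single (s * x) (1 : R) := by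
          refine Finset.sum_congr rfl fun x _ => ?_
          rw [MonoidAlgebra.single_mul_single, one_mul]
    _ = ∑ y ∈ T.image (fun x => s * x), MonoidAlgebra.single y (1 : R) :=
          (Finset.sum_image (f := fun y => MonoidAlgebra.single y (1 : R)) fun x hx y hy h => hinj hx hy h).symm
    _ = sumOf R T := by rw [hL s, sumOf]

lemma right_integral_iff_aux {T : Finset S} (e : S) (he : e ∈ T)
    (hid : ∀ x ∈ T, e * x = x ∧ x * e = x)
    (hR : ∀ s : S, T.image (fun x => x * s) = T)
    (hLid : ∀ s : S, ∀ x ∈ T, s * x ∈ T)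
    (t : MonoidAlgebra R S) :
    IsRightIntegralMA R t ↔ ∃ r : R, t = r • sumOf R T := by
  classical
  constructor
  · intro ht
    refine ⟨t.coeff e, ?_⟩
    have hmap : ∀ s : S, Finsupp.mapDomain (fun x => x * s) t.coeff = t.coeff := fun s => by
      rw [← mul_single_eq_mapDomain, ht s]
    have hsupp : (t.coeff.support : Set S) ⊆ (T : Set S) := by
      intro y hy
      have h1 : t.coeff.support ⊆ t.coeff.support.image (fun x => x * e) := by
        conv_lhs => rw [← hmap e]
        exact Finsupp.mapDomain_support
      obtain ⟨x, hx, rfl⟩ := Finset.mem_image.1 (h1 hy)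
      exact hLid x e he
    have hconst : ∀ z ∈ T, t.coeff z = t.coeff e := by
      intro z hz
      have hinj : Set.InjOn (fun x => x * z) (T : Set S) :=
        Finset.injOn_of_card_image_eq (by rw [hR z])
      have h2 := Finsupp.mapDomain_apply' (T : Set S) t.coeff hsupp hinj (a := e) he
      rw [hmap z] at h2
      simpa [(hid z hz).1] using h2
    ext y
    rw [MonoidAlgebra.coeff_smul_apply, sumOf_apply, smul_eq_mul]
    by_cases hy : y ∈ T
    · rw [if_pos hy, mul_one, hconst y hy]
    · rw [if_neg hy, mul_zero]
      by_contra hc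
      exact hy (hsupp (Finsupp.mem_support_iff.2 hc))
  · rintro ⟨r, rfl⟩ s
    rw [smul_mul_assoc]
    congr 1
    rw [sumOf, Finset.sum_mul]
    have hinj : Set.InjOn (fun x => x * s) (T : Set S) :=
      Finset.injOn_of_card_image_eq (by rw [hR s])
    calc ∑ x ∈ T, MonoidAlgebra.single x (1 : R) * MonoidAlgebra.single s 1
        = ∑ x ∈ T, MonoidAlgebra.single (x * s) (1 : R) := by
          refine Finset.sum_congr rfl fun x _ => ?_
          rw [MonoidAlgebra.single_mul_single, one_mul]
    _ = ∑ y ∈ T.image (fun x => x * s), MonoidAlgebra.single y (1 : R) :=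
          (Finset.sum_image (f := fun y => MonoidAlgebra.single y (1 : R)) fun x hx y hy h => hinj hx hy h).symm
    _ = sumOf R T := by rw [hR s, sumOf]

end Aux

/-- If `R[S]` has a non-zero left integral and a non-zero right integral, then left and right
integrals coincide and form `R·t`, where `t = ∑_{x∈I} x` for the unique two-sided ideal `I`
of `S` which is a finite group. -/
theorem integrals_of_monoidAlgebra_of_left_and_right (R : Type u) [CommRing R] (S : Type v)
    [Monoid S]
    (hl : ∃ t : MonoidAlgebra R S, t ≠ 0 ∧ IsLeftIntegralMA R t)
    (hr : ∃ t : MonoidAlgebra R S, t ≠ 0 ∧ IsRightIntegralMA R t) :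
    ∃ I : Finset S, (IsFiniteGroupLeftIdeal I ∧ IsFiniteGroupRightIdeal I) ∧
      (∀ J : Finset S, IsFiniteGroupLeftIdeal J ∧ IsFiniteGroupRightIdeal J → J = I) ∧
      (∀ t : MonoidAlgebra R S, IsLeftIntegralMA R t ↔ ∃ r : R, t = r • sumOf R I) ∧
      (∀ t : MonoidAlgebra R S, IsRightIntegralMA R t ↔ ∃ r : R, t = r • sumOf R I) := by
  classical
  obtain ⟨t0, ht0ne, ht0⟩ := hl
  obtain ⟨u0, hu0ne, hu0⟩ := hr
  set T := t0.coeff.support with hTdef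
  set U := u0.coeff.support with hUdef
  have hTL : ∀ s : S, T.image (fun x => s * x) = T := fun s =>
    left_integral_support_image ht0 s
  have hUR : ∀ s : S, U.image (fun x => x * s) = U := fun s =>
    right_integral_support_image hu0 s
  have hTne : T.Nonempty := Finsupp.support_nonempty_iff.2 (fun h => ht0ne (MonoidAlgebra.coeff_eq_zero.1 h))
  have hUne : U.Nonempty := Finsupp.support_nonempty_iff.2 (fun h => hu0ne (MonoidAlgebra.coeff_eq_zero.1 h))
  have hTU : T = U := by
    apply Finset.Subset.antisymm
    · intro x hx
      obtain ⟨u, hu⟩ := hUne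
      have h : x ∈ T.image (fun y => u * y) := by rw [hTL u]; exact hx
      obtain ⟨w, hw, rfl⟩ := Finset.mem_image.1 h
      have h2 : u * w ∈ U.image (fun y => y * w) := Finset.mem_image_of_mem _ hu
      rwa [hUR w] at h2
    · intro y hy
      obtain ⟨a, ha⟩ := hTne
      have h : y ∈ U.image (fun z => z * a) := by rw [hUR a]; exact hy
      obtain ⟨v, hv, rfl⟩ := Finset.mem_image.1 h
      have h2 : v * a ∈ T.image (fun z => v * z) := Finset.mem_image_of_mem _ ha
      rwa [hTL v] at h2
  have hTR : ∀ s : S, T.image (fun x => x * s) = T := by rw [hTU]; exact hUR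
  obtain ⟨e, he, hid, hinv⟩ := group_structure hTne hTL hTR
  have hmemL : ∀ s : S, ∀ x ∈ T, s * x ∈ T := fun s x hx => by
    rw [← hTL s]; exact Finset.mem_image_of_mem _ hx
  have hmemR : ∀ s : S, ∀ x ∈ T, x * s ∈ T := fun s x hx => by
    rw [← hTR s]; exact Finset.mem_image_of_mem _ hx
  have hLI : IsFiniteGroupLeftIdeal T := ⟨hTne, hmemL, e, he, hid, hinv⟩
  have hRI : IsFiniteGroupRightIdeal T := ⟨hTne, hmemR, e, he, hid, hinv⟩
  refine ⟨T, ⟨hLI, hRI⟩, ?_, ?_, ?_⟩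
  · intro J hJ
    exact Finset.Subset.antisymm (subset_aux hJ.2 hLI) (subset_aux hRI hJ.1)
  · intro t
    exact left_integral_iff_aux e he hid hTL hmemR t
  · intro t
    exact right_integral_iff_aux e he hid hTR hmemL t
end

section
/- Let S be a right cancellative monoid and R a commutative ring. Then R[S] contains a non-zero left integral if and only if S is a finite group. In particular, the group ring R[G] contains a non-zero integral if and only if G is finite. -/
universe u v

/-!
If `t ≠ 0` is a left integral and `a` lies in its support, then `s·t = t` forces `a` into the
support of `s·t`, so `a = s * x` for some `x` in the (finite) support of `t`. By right
cancellation `s ↦ x` is injective, so `S` is finite, and then every right multiplication, being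
injective, is bijective: `S` is a group. Conversely, for a finite group the sum of all its
elements is a non-zero left integral.
-/

section

variable {R : Type u} [CommRing R] {S : Type v} [Monoid S]

theorem IsLeftIntegralMA.exists_mem_support_mul_eq {t : MonoidAlgebra R S}
    (ht : IsLeftIntegralMA R t) {a : S} (ha : a ∈ t.coeff.support) (s : S) :
    ∃ x ∈ t.coeff.support, s * x = a := by
  classical
  rw [← ht s] at ha
  simpa using MonoidAlgebra.support_coeff_single_mul_subset t 1 s ha

theorem IsLeftIntegralMA.finite_of_ne_zero [IsRightCancelMul S] {t : MonoidAlgebra R S}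
    (ht : IsLeftIntegralMA R t) (ht0 : t ≠ 0) : Finite S := by
  obtain ⟨a, ha⟩ : t.coeff.support.Nonempty := by
    simpa [Finsupp.support_nonempty_iff, MonoidAlgebra.coeff_eq_zero] using ht0
  choose x hx hxa using ht.exists_mem_support_mul_eq ha
  refine Finite.of_injective (fun s => (⟨x s, hx s⟩ : t.coeff.support)) fun s s' h => ?_
  have hxs : x s = x s' := Subtype.ext_iff.mp h
  apply mul_right_cancel (b := x s)
  rw [hxa, hxs, hxa]

theorem IsRightCancelMul.isUnit_of_finite [Finite S] [IsRightCancelMul S] (s : S) : IsUnit s :=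
  (IsRightCancelMul.mul_right_cancel s).isUnit_of_finite

theorem IsRightCancelMul.isLeftCancelMul_of_finite [Finite S] [IsRightCancelMul S] :
    IsLeftCancelMul S :=
  ⟨fun s => (IsRightCancelMul.isUnit_of_finite s).isRegular.left⟩

namespace MonoidAlgebra

theorem isLeftIntegralMA_sum_single [Fintype S] [IsLeftCancelMul S] :
    IsLeftIntegralMA R (∑ s : S, single s (1 : R)) := by
  intro s
  rw [Finset.mul_sum]
  refine Fintype.sum_bijective (s * ·) (Finite.injective_iff_bijective.mp (mul_right_injective s))
    _ _ fun x => ?_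
  rw [single_mul_single, one_mul]

theorem sum_single_one_ne_zero [Nontrivial R] [Fintype S] :
    (∑ s : S, single s (1 : R)) ≠ 0 := by
  classical
  intro h
  simpa [coeff_sum, coeff_single, Finsupp.single_apply] using congrArg (·.coeff 1) h

variable (R) in
theorem exists_isLeftIntegralMA_ne_zero_iff_finite [Nontrivial R] [IsRightCancelMul S] :
    (∃ t : MonoidAlgebra R S, t ≠ 0 ∧ IsLeftIntegralMA R t) ↔ Finite S := by
  refine ⟨fun ⟨t, ht0, ht⟩ => ht.finite_of_ne_zero ht0, fun _ => ?_⟩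
  have := Fintype.ofFinite S
  have := IsRightCancelMul.isLeftCancelMul_of_finite (S := S)
  exact ⟨_, sum_single_one_ne_zero, isLeftIntegralMA_sum_single⟩

end MonoidAlgebra

end

/-- For a right cancellative monoid `S`, `R[S]` contains a non-zero left integral iff `S` is a
finite group. In particular, for a group `G`, the group ring `R[G]` contains a non-zero
(left) integral iff `G` is finite. -/
theorem monoidAlgebra_has_integral_iff_finite_group (R : Type u) [CommRing R] [Nontrivial R] :
    (∀ (S : Type v) (_ : Monoid S), (∀ a b c : S, b * a = c * a → b = c) →
      ((∃ t : MonoidAlgebra R S, t ≠ 0 ∧ IsLeftIntegralMA R t) ↔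
        (Finite S ∧ ∀ s : S, ∃ y : S, s * y = 1 ∧ y * s = 1))) ∧
    (∀ (G : Type v) (_ : Group G),
      (∃ t : MonoidAlgebra R G, t ≠ 0 ∧ IsLeftIntegralMA R t) ↔ Finite G) := by
  refine ⟨fun S _ hrc => ?_, fun G _ => MonoidAlgebra.exists_isLeftIntegralMA_ne_zero_iff_finite R⟩
  have : IsRightCancelMul S := ⟨fun a b c h => hrc a b c h⟩
  rw [MonoidAlgebra.exists_isLeftIntegralMA_ne_zero_iff_finite R]
  exact ⟨fun hfin => ⟨hfin, fun s => isUnit_iff_exists.mp (IsRightCancelMul.isUnit_of_finite s)⟩,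
    And.left⟩
end
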